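/- For any Dyck graph G on [n], the statistic st_G = inv_G + maj_G is Mahonian: the sum over all permutations sigma in S_n of t^{st_G(sigma)} equals the t-factorial [n]_t! = product over k=1..n of (1 + t + ... + t^{k-1}). -/

import Mathlib

open scoped Classical

/-- A Dyck graph: if `(i,j)` is an edge then so is every `(i',j')` with
`i ≤ i' < j' ≤ j`. -/
def DyckGraph {n : ℕ} (G : SimpleGraph (Fin n)) : Prop :=
  ∀ i j i' j' : Fin n, G.Adj i j → i ≤ i' → i' < j' → j' ≤ j → G.Adj i' j'

/-- `inv_G(σ)`: the number of edges `(i < j)` of `G` such that `i` is to the right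
of `j` in the one-line notation of `σ`. -/
noncomputable def invG {n : ℕ} (G : SimpleGraph (Fin n)) (σ : Equiv.Perm (Fin n)) : ℕ :=
  (Finset.univ.filter fun p : Fin n × Fin n =>
    p.1 < p.2 ∧ G.Adj p.1 p.2 ∧ σ⁻¹ p.2 < σ⁻¹ p.1).card

/-- `maj_G(σ)`: the sum of the (1-based) positions `i` such that `σ_i > σ_{i+1}`
and `(σ_{i+1}, σ_i)` is not an edge of `G`. -/
noncomputable def majG {n : ℕ} (G : SimpleGraph (Fin n)) (σ : Equiv.Perm (Fin n)) : ℕ :=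
  ∑ k ∈ Finset.range n,
    if h : k + 1 < n then
      (if σ ⟨k + 1, h⟩ < σ ⟨k, Nat.lt_of_succ_lt h⟩ ∧
          ¬ G.Adj (σ ⟨k + 1, h⟩) (σ ⟨k, Nat.lt_of_succ_lt h⟩) then k + 1 else 0)
    else 0

/-- The Mahonian statistic `st_G = inv_G + maj_G`. -/
noncomputable def stG {n : ℕ} (G : SimpleGraph (Fin n)) (σ : Equiv.Perm (Fin n)) : ℕ :=
  invG G σ + majG G σ

/-!
Every permutation of `[m + 1]` arises exactly once by inserting the maximal letter `m + 1` into a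
permutation `σ` of `[m]` at one of the positions `p = 0, …, m`. The increase of `st_G` caused by
this insertion depends only on which letters of `σ` are adjacent in `G` to `m + 1` and on where
the `G`-descents of `σ` end. The Dyck property says that the letter ending a `G`-descent is never
adjacent to `m + 1`, and under this condition the `m + 1` increases are exactly `0, 1, …, m`
(by induction on `m`). Hence inserting `m + 1` multiplies the generating function by `[m + 1]_t`.
-/

open Finset Equiv

section InsertionShift

variable (m : ℕ) (a b : ℕ → Prop)

/-- The increase of `st_G` when the new maximal letter is inserted at position `p` into a word of
length `m`, where `a q` says that the letter at position `q` is adjacent to the new letter and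
`b q` that a `G`-descent ends at position `q`. -/
noncomputable def insertionShift (p : ℕ) : ℕ :=
  #{q ∈ Ico p m | a q} + #{q ∈ Ico (p + 1) m | b q} +
    if p < m ∧ ¬ a p then (if b p then 1 else p + 1) else 0

theorem insertionShift_self : insertionShift m a b m = 0 := by
  simp [insertionShift]

variable {m} in
theorem insertionShift_succ_of_lt {p : ℕ} (hp : p < m) :
    insertionShift (m + 1) a b p =
      insertionShift m a b p + ((if a m then 1 else 0) + if b m then 1 else 0) := by
  simp only [insertionShift, Nat.Ico_succ_right_eq_insert_Ico hp.le,
    Nat.Ico_succ_right_eq_insert_Ico (Nat.succ_le_of_lt hp), filter_insert,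
    show p < m + 1 by omega, hp, true_and]
  split_ifs <;> simp_all <;> omega

theorem insertionShift_succ_self :
    insertionShift (m + 1) a b m =
      (if a m then 1 else 0) + if ¬ a m then (if b m then 1 else m + 1) else 0 := by
  simp [insertionShift, filter_singleton, apply_ite card]

theorem sum_pow_insertionShift {R : Type*} [CommSemiring R] (x : R) (hab : ∀ q, b q → ¬ a q) :
    ∑ p ∈ range (m + 1), x ^ insertionShift m a b p = ∑ j ∈ range (m + 1), x ^ j := by
  induction m with
  | zero => simp [insertionShift]
  | succ m ih =>
    rw [sum_range_succ, insertionShift_self, sum_range_succ, insertionShift_succ_self,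
      sum_congr rfl fun p hp => by rw [insertionShift_succ_of_lt a b (mem_range.1 hp), pow_add],
      ← sum_mul]
    rw [sum_range_succ, insertionShift_self] at ih
    have hab_m := hab m
    by_cases ham : a m <;> by_cases hbm : b m <;>
      simp_all only [if_true, if_false, not_true, not_false_eq_true]
    · simp only [sum_range_succ' _ (m + 1), pow_succ, ← sum_mul, ← ih]; ring
    · simp only [sum_range_succ' _ (m + 1), pow_succ, ← sum_mul, ← ih]; ring
    · rw [sum_range_succ _ (m + 1), ← ih]; ring

theorem insertionShift_eq_sum (p : ℕ) :
    insertionShift m a b p = ∑ q ∈ range m,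
      ((if p ≤ q ∧ a q then 1 else 0) + (if p < q ∧ b q then 1 else 0) +
        if q = p ∧ ¬ a q then (if b q then 1 else q + 1) else 0) := by
  have h_Ico (k : ℕ) : Ico k m = {q ∈ range m | k ≤ q} := by
    rw [range_eq_Ico, Ico_filter_le, max_eq_right k.zero_le]
  simp only [insertionShift, sum_add_distrib, h_Ico, filter_filter, card_filter, ite_and,
    sum_ite_eq', mem_range, Nat.succ_le_iff]

end InsertionShift

namespace Equiv.Perm

variable {m : ℕ}

/-- The one-line notation of `σ` with the letter `last m` inserted at position `p`. -/
noncomputable def insertMax (σ : Perm (Fin m)) (p : Fin (m + 1)) : Perm (Fin (m + 1)) :=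
  (finSuccEquiv' p).trans ((optionCongr σ).trans finSuccEquivLast.symm)

variable (σ : Perm (Fin m)) (p : Fin (m + 1))

@[simp] theorem insertMax_apply_self : insertMax σ p p = Fin.last m := by
  simp [insertMax]

@[simp] theorem insertMax_apply_succAbove (q : Fin m) :
    insertMax σ p (p.succAbove q) = (σ q).castSucc := by
  simp [insertMax]

@[simp] theorem insertMax_inv_last : (insertMax σ p)⁻¹ (Fin.last m) = p := by
  rw [inv_eq_iff_eq, insertMax_apply_self]

@[simp] theorem insertMax_inv_castSucc (i : Fin m) :
    (insertMax σ p)⁻¹ i.castSucc = p.succAbove (σ⁻¹ i) := by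
  rw [inv_eq_iff_eq]; simp

theorem insertMax_bijective :
    Function.Bijective fun x : Perm (Fin m) × Fin (m + 1) => insertMax x.1 x.2 := by
  refine (Fintype.bijective_iff_injective_and_card _).2 ⟨?_, ?_⟩
  · rintro ⟨σ, p⟩ ⟨τ, q⟩ h
    obtain rfl : p = q := by simpa using congr($h⁻¹ (Fin.last m))
    obtain rfl : σ = τ := Equiv.ext fun i => by
      simpa using congr($h (p.succAbove i))
    rfl
  · simp [Fintype.card_perm, Nat.factorial_succ, mul_comm]

end Equiv.Perm

open Equiv.Perm

theorem invG_eq_sum {n : ℕ} (G : SimpleGraph (Fin n)) (σ : Perm (Fin n)) :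
    invG G σ = ∑ x, ∑ y, if x < y ∧ G.Adj x y ∧ σ⁻¹ y < σ⁻¹ x then 1 else 0 := by
  rw [invG, card_filter, Fintype.sum_prod_type]

theorem invG_insertMax {m : ℕ} (G : SimpleGraph (Fin (m + 1))) (σ : Perm (Fin m))
    (p : Fin (m + 1)) :
    invG G (insertMax σ p) = invG (G.comap Fin.castSucc) σ +
      ∑ q : Fin m, if p ≤ q.castSucc ∧ G.Adj (σ q).castSucc (Fin.last m) then 1 else 0 := by
  simp only [invG_eq_sum, Fin.sum_univ_castSucc (n := m), insertMax_inv_castSucc,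
    insertMax_inv_last, Fin.castSucc_lt_castSucc_iff, Fin.succAbove_lt_succAbove_iff,
    Fin.castSucc_lt_last, Fin.lt_succAbove_iff_le_castSucc, SimpleGraph.comap_adj,
    Fin.not_lt.2 (Fin.le_last _), true_and, false_and, if_false, sum_const_zero, add_zero]
  rw [sum_add_distrib]
  congr 1
  exact Fintype.sum_equiv σ⁻¹ _ _ fun x => by simp [and_comm]

/-- `σ (j - 1) > σ j` is a `G`-descent; `majG` counts it with weight `j`, its 1-based position. -/
def IsGDescentAt {n : ℕ} (G : SimpleGraph (Fin n)) (σ : Perm (Fin n)) (j : Fin n) : Prop :=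
  ∃ i : Fin n, (i : ℕ) + 1 = j ∧ σ j < σ i ∧ ¬ G.Adj (σ j) (σ i)

theorem isGDescentAt_succ {n : ℕ} (G : SimpleGraph (Fin (n + 1))) (σ : Perm (Fin (n + 1)))
    (k : Fin n) :
    IsGDescentAt G σ k.succ ↔ σ k.succ < σ k.castSucc ∧ ¬ G.Adj (σ k.succ) (σ k.castSucc) := by
  refine ⟨fun ⟨i, hi, h⟩ => ?_, fun h => ⟨k.castSucc, by simp, h⟩⟩
  obtain rfl : i = k.castSucc := Fin.ext (by simpa using hi)
  exact h

theorem majG_eq_sum {n : ℕ} (G : SimpleGraph (Fin n)) (σ : Perm (Fin n)) :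
    majG G σ = ∑ j : Fin n, if IsGDescentAt G σ j then (j : ℕ) else 0 := by
  cases n with
  | zero => simp [majG]
  | succ n =>
    rw [Fin.sum_univ_succ, majG, sum_range_succ, ← Fin.sum_univ_eq_sum_range,
      dif_neg (lt_irrefl _)]
    simp only [Fin.val_zero, ite_self, zero_add, add_zero, Fin.val_succ, isGDescentAt_succ]
    exact sum_congr rfl fun k _ => by rw [dif_pos (by omega)]; rfl

theorem Fin.val_succAbove {m : ℕ} (p : Fin (m + 1)) (i : Fin m) :
    (p.succAbove i : ℕ) = if (i : ℕ) < p then (i : ℕ) else (i : ℕ) + 1 := by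
  rw [Fin.succAbove]
  split_ifs <;> simp_all [Fin.lt_def]

section InsertionDescents

variable {m : ℕ} (G : SimpleGraph (Fin (m + 1))) (σ : Perm (Fin m)) (p : Fin (m + 1))

theorem not_isGDescentAt_insertMax_self : ¬ IsGDescentAt G (insertMax σ p) p := by
  rintro ⟨i, -, h, -⟩
  exact (insertMax_apply_self σ p ▸ h).not_ge (Fin.le_last _)

theorem isGDescentAt_insertMax_succAbove (j : Fin m) :
    IsGDescentAt G (insertMax σ p) (p.succAbove j) ↔
      (j : ℕ) = p ∧ ¬ G.Adj (σ j).castSucc (Fin.last m) ∨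
        (j : ℕ) ≠ p ∧ IsGDescentAt (G.comap Fin.castSucc) σ j := by
  have h_self : (p : ℕ) + 1 = p.succAbove j ↔ (j : ℕ) = p := by
    rw [Fin.val_succAbove]; split_ifs <;> omega
  have h_succAbove (i : Fin m) :
      (p.succAbove i : ℕ) + 1 = p.succAbove j ↔ (i : ℕ) + 1 = j ∧ (j : ℕ) ≠ p := by
    simp only [Fin.val_succAbove]; split_ifs <;> omega
  simp only [IsGDescentAt, Fin.exists_iff_succAbove p, h_self, h_succAbove, insertMax_apply_self,
    insertMax_apply_succAbove, Fin.castSucc_lt_last, Fin.castSucc_lt_castSucc_iff,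
    SimpleGraph.comap_adj, true_and, and_assoc]
  exact or_congr_right ⟨fun ⟨i, hi, hj, h⟩ => ⟨hj, i, hi, h⟩, fun ⟨hj, i, hi, h⟩ => ⟨i, hi, hj, h⟩⟩

end InsertionDescents

section Dyck

variable {m : ℕ} {G : SimpleGraph (Fin (m + 1))}

theorem DyckGraph.comap_castSucc (hG : DyckGraph G) : DyckGraph (G.comap Fin.castSucc) :=
  fun _ _ _ _ hadj h₁ h₂ h₃ => hG _ _ _ _ hadj h₁ h₂ h₃

theorem DyckGraph.not_adj_last_of_isGDescentAt (hG : DyckGraph G) {σ : Perm (Fin m)}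
    {j : Fin m} (h : IsGDescentAt (G.comap Fin.castSucc) σ j) :
    ¬ G.Adj (σ j).castSucc (Fin.last m) := by
  obtain ⟨i, -, hlt, hnadj⟩ := h
  exact fun hadj => hnadj (hG _ _ _ _ hadj le_rfl (Fin.castSucc_lt_castSucc_iff.2 hlt)
    (Fin.le_last _))

theorem stG_insertMax (hG : DyckGraph G) (σ : Perm (Fin m)) (p : Fin (m + 1)) :
    stG G (insertMax σ p) = stG (G.comap Fin.castSucc) σ +
      insertionShift m (fun q => ∃ h : q < m, G.Adj (σ ⟨q, h⟩).castSucc (Fin.last m))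
        (fun q => ∃ h : q < m, IsGDescentAt (G.comap Fin.castSucc) σ ⟨q, h⟩) p := by
  rw [stG, stG, invG_insertMax, majG_eq_sum, majG_eq_sum, Fin.sum_univ_succAbove _ p,
    insertionShift_eq_sum, ← Fin.sum_univ_eq_sum_range]
  simp only [not_isGDescentAt_insertMax_self, isGDescentAt_insertMax_succAbove, if_false,
    zero_add, Fin.is_lt, exists_true_left, Fin.eta, add_assoc, ← sum_add_distrib]
  -- compare the contributions of each position `j` of `σ`
  refine congrArg (_ + ·) (sum_congr rfl fun j _ => ?_)
  have hab := hG.not_adj_last_of_isGDescentAt (σ := σ) (j := j)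
  simp only [Fin.val_succAbove, Fin.le_def, Fin.val_castSucc]
  split_ifs <;> simp_all <;> omega

end Dyck

theorem sum_pow_stG_eq_prod {R : Type*} [CommSemiring R] (x : R) (n : ℕ)
    (G : SimpleGraph (Fin n)) (hG : DyckGraph G) :
    ∑ σ : Perm (Fin n), x ^ stG G σ = ∏ k ∈ range n, ∑ j ∈ range (k + 1), x ^ j := by
  induction n with
  | zero => simp [stG, invG, majG]
  | succ m ih =>
    rw [← insertMax_bijective.sum_comp, Fintype.sum_prod_type, prod_range_succ,
      ← ih _ hG.comap_castSucc, sum_mul]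
    refine sum_congr rfl fun σ _ => ?_
    simp only [stG_insertMax hG, pow_add, ← mul_sum]
    rw [Fin.sum_univ_eq_sum_range (fun p => x ^ insertionShift m _ _ p),
      sum_pow_insertionShift _ _ _ x fun q ⟨h, hq⟩ ⟨_, hadj⟩ =>
        hG.not_adj_last_of_isGDescentAt hq hadj]

/-- Mahonian property: `Σ_{σ ∈ S_n} t^{st_G(σ)} = [n]_t!`. -/
theorem stmt8 (n : ℕ) (G : SimpleGraph (Fin n)) (hG : DyckGraph G) :
    ∑ σ : Equiv.Perm (Fin n), (Polynomial.X : Polynomial ℚ) ^ stG G σ =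
      ∏ k ∈ Finset.range n, ∑ j ∈ Finset.range (k + 1), (Polynomial.X : Polynomial ℚ) ^ j :=
  sum_pow_stG_eq_prod _ n G hG
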